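/- arXiv:2112.06271 — 3 statements merged into one kernel-verified Lean document; each statement's English description precedes it below -/
import Mathlib

section
/- Let H1 and H2 be complex Hilbert spaces with H2 finite-dimensional and nonzero. If T = T1 ⊗ T2 is a bounded operator on H1 ⊗ H2 (with T1 bounded on H1 and T2 a linear map on H2) that is selfadjoint and satisfies T² = 1, then there exist a selfadjoint operator T̃1 on H1 with T̃1² = 1 and a selfadjoint operator T̃2 on H2 with T̃2² = 1 such that T = T̃1 ⊗ T̃2. -/
/-!
If `A ⊗ B = A' ⊗ B'` with `A, B ≠ 0`, contracting either factor against a functional shows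
`A' = c • A` and `B = c • B'` for one scalar `c`. Applied to `T² = 1` and `T* = T` this gives
`T₁² = c • 1` and `T₁* = λ • T₁`. Then `|λ| = 1`, a square root `z` of `λ` makes `z • T₁`
selfadjoint, its square is a positive multiple `r` of the identity, and `β = z / √r` yields
`T̃₁ = β • T₁`, `T̃₂ = β⁻¹ • T₂`. The properties of `T̃₂` follow by cancelling the nonzero
factor `T̃₁` in `T̃₁* ⊗ T̃₂* = T̃₁ ⊗ T̃₂` and in `T̃₁² ⊗ T̃₂² = 1 ⊗ 1`.
-/

open scoped TensorProduct InnerProductSpace ComplexConjugate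

namespace TensorProduct

variable {K M N P Q : Type*} [Field K] [AddCommGroup M] [Module K M] [AddCommGroup N]
  [Module K N] [AddCommGroup P] [Module K P] [AddCommGroup Q] [Module K Q]

theorem exists_smul_of_map_eq_map {f f' : M →ₗ[K] P} {g g' : N →ₗ[K] Q} (hf : f ≠ 0)
    (hg : g ≠ 0) (h : map f g = map f' g') : ∃ c : K, f' = c • f ∧ g = c • g' := by
  obtain ⟨x₀, hx₀⟩ : ∃ x, f x ≠ 0 := by simpa [LinearMap.ext_iff] using hf
  obtain ⟨y₀, hy₀⟩ : ∃ y, g y ≠ 0 := by simpa [LinearMap.ext_iff] using hg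
  obtain ⟨φ, hφ⟩ := Module.Projective.exists_dual_eq_one K hx₀
  obtain ⟨ψ, hψ⟩ := Module.Projective.exists_dual_eq_one K hy₀
  have htmul (x : M) (y : N) : f x ⊗ₜ g y = f' x ⊗ₜ[K] g' y := by
    simpa using congr($h (x ⊗ₜ y))
  have hleft (x : M) : f x = ψ (g' y₀) • f' x := by
    simpa [hψ] using congr(TensorProduct.rid K P (LinearMap.lTensor P ψ $(htmul x y₀)))
  have hright (y : N) : g y = φ (f' x₀) • g' y := by
    simpa [hφ] using congr(TensorProduct.lid K Q (LinearMap.rTensor Q φ $(htmul x₀ y)))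
  have hprod : ψ (g' y₀) * φ (f' x₀) = 1 := by
    simpa [hφ] using congr(φ $(hleft x₀)).symm
  refine ⟨φ (f' x₀), LinearMap.ext fun x => ?_, LinearMap.ext hright⟩
  rw [LinearMap.smul_apply, hleft, smul_smul, mul_comm, hprod, one_smul]

theorem map_left_cancel {f : M →ₗ[K] P} {g g' : N →ₗ[K] Q} (hf : f ≠ 0) (hg : g ≠ 0)
    (h : map f g = map f g') : g = g' := by
  obtain ⟨c, hc, rfl⟩ := exists_smul_of_map_eq_map hf hg h
  have : (c - 1) • f = 0 := by rw [sub_smul, one_smul, ← hc, sub_self]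
  rw [sub_eq_zero.mp ((smul_eq_zero.mp this).resolve_right hf), one_smul]

theorem map_smul_smul_inv {c : K} (hc : c ≠ 0) (f : M →ₗ[K] P) (g : N →ₗ[K] Q) :
    map (c • f) (c⁻¹ • g) = map f g := by
  rw [map_smul_left, map_smul_right, smul_smul, mul_inv_cancel₀ hc, one_smul]

end TensorProduct

section

variable {E : Type*} [NormedAddCommGroup E] [InnerProductSpace ℂ E] [CompleteSpace E]

open ContinuousLinearMap

theorem exists_isSelfAdjoint_smul_of_adjoint_eq_smul {T : E →L[ℂ] E} (hT : T ≠ 0) {l : ℂ}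
    (h : adjoint T = l • T) : ∃ α : ℂ, α ≠ 0 ∧ IsSelfAdjoint (α • T) := by
  have hl : ‖l‖ = 1 := by
    have hT' : (conj l * l) • T = (1 : ℂ) • T := by
      rw [one_smul, mul_smul, ← h, ← map_smulₛₗ, ← h, adjoint_adjoint]
    have : (‖l‖ ^ 2 : ℂ) = 1 := by
      rw [← Complex.conj_mul']
      exact smul_left_injective ℂ hT hT'
    exact (pow_eq_one_iff_of_nonneg (norm_nonneg l) two_ne_zero).mp (by exact_mod_cast this)
  obtain ⟨z, hz⟩ := IsAlgClosed.exists_pow_nat_eq l two_pos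
  have hz1 : conj z * z = 1 := by
    rw [Complex.conj_mul', ← Complex.ofReal_pow, ← norm_pow, hz, hl, Complex.ofReal_one]
  refine ⟨z, fun h0 => by simp [h0] at hz1, ?_⟩
  rw [IsSelfAdjoint, star_eq_adjoint, map_smulₛₗ, h, smul_smul, ← hz]
  congr 1
  linear_combination z * hz1

theorem IsSelfAdjoint.exists_pos_of_mul_self_eq_smul_one {S : E →L[ℂ] E} (hS : IsSelfAdjoint S)
    (hS0 : S ≠ 0) {c : ℂ} (h : S * S = c • 1) : ∃ r : ℝ, 0 < r ∧ c = r := by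
  obtain ⟨x, hx⟩ : ∃ x, S x ≠ 0 := by simpa [ContinuousLinearMap.ext_iff] using hS0
  have hx0 : x ≠ 0 := by rintro rfl; simp at hx
  have key : ⟪S x, S x⟫_ℂ = c * ⟪x, x⟫_ℂ := by
    rw [← adjoint_inner_right, hS.adjoint_eq, ← mul_apply_eq_comp, h]
    simp [inner_smul_right]
  simp only [inner_self_eq_norm_sq_to_K] at key
  refine ⟨‖S x‖ ^ 2 / ‖x‖ ^ 2, by positivity, ?_⟩
  have : (‖x‖ : ℂ) ≠ 0 := by exact_mod_cast norm_ne_zero_iff.mpr hx0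
  push_cast
  field_simp
  linear_combination -key

theorem exists_smul_isSelfAdjoint_mul_self_eq_one {T : E →L[ℂ] E} (hT : T ≠ 0) {l c : ℂ}
    (hadj : adjoint T = l • T) (hsq : T * T = c • 1) :
    ∃ β : ℂ, β ≠ 0 ∧ IsSelfAdjoint (β • T) ∧ (β • T) * (β • T) = 1 := by
  obtain ⟨α, hα, hαT⟩ := exists_isSelfAdjoint_smul_of_adjoint_eq_smul hT hadj
  have hsq' : (α • T) * (α • T) = (α * α * c) • 1 := by
    rw [smul_mul_smul_comm, hsq, smul_smul]
  obtain ⟨r, hr, hrc⟩ := hαT.exists_pos_of_mul_self_eq_smul_one (smul_ne_zero hα hT) hsq'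
  have hs : (√r : ℂ) ≠ 0 := by exact_mod_cast (Real.sqrt_pos.mpr hr).ne'
  refine ⟨(√r : ℂ)⁻¹ * α, mul_ne_zero (inv_ne_zero hs) hα, ?_, ?_⟩
  · rw [mul_smul]
    exact IsSelfAdjoint.smul (by simp [IsSelfAdjoint]) hαT
  · rw [mul_smul, smul_mul_smul_comm, hsq', hrc, smul_smul]
    convert one_smul ℂ (1 : E →L[ℂ] E)
    have : (√r : ℂ) ^ 2 = r := by exact_mod_cast Real.sq_sqrt hr.le
    field_simp
    exact this.symm

end

/-- A selfadjoint tensor-product operator `T = T1 ⊗ T2` squaring to the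
identity on `H1 ⊗ H2` (with `H2` finite-dimensional and nonzero) factors as a tensor
product of selfadjoint operators each squaring to the identity.
Selfadjointness of `T1 ⊗ T2` is encoded as `T1† ⊗ T2† = T1 ⊗ T2`. -/
theorem stmt0
    {H1 : Type*} [NormedAddCommGroup H1] [InnerProductSpace ℂ H1] [CompleteSpace H1]
    {H2 : Type*} [NormedAddCommGroup H2] [InnerProductSpace ℂ H2]
    [FiniteDimensional ℂ H2] [Nontrivial H2]
    (T1 : H1 →L[ℂ] H1) (T2 : H2 →ₗ[ℂ] H2) (hT1 : T1 ≠ 0) (hT2 : T2 ≠ 0)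
    (hsa : TensorProduct.map ((ContinuousLinearMap.adjoint T1) : H1 →ₗ[ℂ] H1)
        (LinearMap.adjoint T2)
      = TensorProduct.map (T1 : H1 →ₗ[ℂ] H1) T2)
    (hsq : (TensorProduct.map (T1 : H1 →ₗ[ℂ] H1) T2) ∘ₗ
        (TensorProduct.map (T1 : H1 →ₗ[ℂ] H1) T2) = LinearMap.id) :
    ∃ (S1 : H1 →L[ℂ] H1) (S2 : H2 →ₗ[ℂ] H2),
      IsSelfAdjoint S1 ∧ S1 * S1 = 1 ∧
      LinearMap.IsSymmetric S2 ∧ S2 ∘ₗ S2 = LinearMap.id ∧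
      TensorProduct.map (S1 : H1 →ₗ[ℂ] H1) S2
        = TensorProduct.map (T1 : H1 →ₗ[ℂ] H1) T2 := by
  open TensorProduct ContinuousLinearMap in
  have : Nontrivial H1 :=
    (subsingleton_or_nontrivial H1).resolve_left fun _ => hT1 (Subsingleton.elim _ _)
  have hA : (T1 : H1 →ₗ[ℂ] H1) ≠ 0 := fun h => hT1 (coe_injective h)
  have hid1 : (LinearMap.id : H1 →ₗ[ℂ] H1) ≠ 0 := one_ne_zero
  have hid2 : (LinearMap.id : H2 →ₗ[ℂ] H2) ≠ 0 := one_ne_zero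
  obtain ⟨l, hl, -⟩ := exists_smul_of_map_eq_map hA hT2 hsa.symm
  have hsq' : map .id .id = map ((T1 : H1 →ₗ[ℂ] H1) ∘ₗ T1) (T2 ∘ₗ T2) := by
    rw [map_comp, hsq, map_id]
  obtain ⟨c, hc, -⟩ := exists_smul_of_map_eq_map hid1 hid2 hsq'
  obtain ⟨β, hβ, hS1sa, hS1sq⟩ := exists_smul_isSelfAdjoint_mul_self_eq_one hT1
    (coe_injective (by simpa using hl))
    (coe_injective (by simpa [Module.End.mul_eq_comp, ← Module.End.one_eq_id] using hc))
  have hmap := map_smul_smul_inv hβ (T1 : H1 →ₗ[ℂ] H1) T2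
  refine ⟨β • T1, β⁻¹ • T2, hS1sa, hS1sq, ?_, ?_, hmap⟩
  · have hS1 : ((β • T1 : H1 →L[ℂ] H1) : H1 →ₗ[ℂ] H1) ≠ 0 := by
      rw [toLinearMap_smul]; exact smul_ne_zero hβ hA
    rw [LinearMap.isSymmetric_iff_isSelfAdjoint, IsSelfAdjoint, LinearMap.star_eq_adjoint]
    refine (map_left_cancel hS1 (smul_ne_zero (inv_ne_zero hβ) hT2) ?_).symm
    calc map ((β • T1 : H1 →L[ℂ] H1) : H1 →ₗ[ℂ] H1) (β⁻¹ • T2)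
        = map (adjoint T1 : H1 →ₗ[ℂ] H1) (LinearMap.adjoint T2) := hmap.trans hsa.symm
      _ = map (adjoint (β • T1) : H1 →ₗ[ℂ] H1) (LinearMap.adjoint (β⁻¹ • T2)) := by
        rw [map_smulₛₗ, map_smulₛₗ, map_inv₀, toLinearMap_smul,
          map_smul_smul_inv ((map_ne_zero _).mpr hβ)]
      _ = _ := by rw [hS1sa.adjoint_eq]
  · refine (map_left_cancel hid1 hid2 ?_).symm
    calc map .id .id = map (T1 : H1 →ₗ[ℂ] H1) T2 ∘ₗ map (T1 : H1 →ₗ[ℂ] H1) T2 := by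
          rw [map_id, hsq]
      _ = map (((β • T1) * (β • T1) : H1 →L[ℂ] H1) : H1 →ₗ[ℂ] H1)
          ((β⁻¹ • T2) ∘ₗ (β⁻¹ • T2)) := by
        rw [← hmap, ← map_comp]; rfl
      _ = _ := by rw [hS1sq]; rfl
end

section
/- Let (A, H, D) be a real spectral triple with real structure J (an antiunitary with J² = ε) satisfying the order-zero condition [π0(a), Jπ0(b*)J⁻¹] = 0 for all a, b ∈ A, with A unital. Let T be a bounded selfadjoint operator with T² = 1 commuting with π0(A), and π(a,a') = ((1+T)/2)π0(a) + ((1−T)/2)π0(a'). Then [π(a,a'), Jπ(b*,b'*)J⁻¹] = 0 for all a,a',b,b' ∈ A if and only if [T, JTJ⁻¹] = 0 and [π0(a), JTJ⁻¹] = 0 for all a ∈ A. -/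
/-- For a real spectral triple with antiunitary real structure `J` (`J² = ε`,
`J⁻¹ = ε J`) satisfying the order-zero condition, and a bounded selfadjoint twisting
operator `T` with `T² = 1` commuting with `π0(A)`, the order-zero condition for the
minimally twisted representation `π(a,a') = ((1+T)/2)π0(a) + ((1−T)/2)π0(a')` holds,
i.e. `[π(a,a'), Jπ(b*,b'*)J⁻¹] = 0` for all `a,a',b,b'`, if and only if
`[T, JTJ⁻¹] = 0` and `[π0(a), JTJ⁻¹] = 0` for all `a ∈ A`. -/
theorem stmt6
    {H : Type*} [NormedAddCommGroup H] [InnerProductSpace ℂ H] [CompleteSpace H]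
    {A : Type*} [Ring A] [StarRing A] [Algebra ℂ A] [StarModule ℂ A]
    (π0 : A →⋆ₐ[ℂ] (H →L[ℂ] H))
    (J : H → H) (ε : ℂ) (hε : ε = 1 ∨ ε = -1)
    (hJadd : ∀ x y : H, J (x + y) = J x + J y)
    (hJsmul : ∀ (c : ℂ) (x : H), J (c • x) = (starRingEnd ℂ c) • J x)
    (hJnorm : ∀ x : H, ‖J x‖ = ‖x‖)
    (hJ2 : ∀ x : H, J (J x) = ε • x)
    -- conjugation by J : `hat S = J ∘ S ∘ J⁻¹` with `J⁻¹ = ε J`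
    (hat : (H → H) → H → H)
    (hhat : ∀ (S : H → H) (x : H), hat S x = J (S (ε • J x)))
    -- order-zero condition of the initial spectral triple
    (h0 : ∀ (a b : A) (x : H), π0 a (hat (π0 (star b)) x) = hat (π0 (star b)) (π0 a x))
    (T : H →L[ℂ] H) (hsa : IsSelfAdjoint T) (hsq : T * T = 1)
    (hcomm : ∀ a : A, T * π0 a = π0 a * T)
    (π : A × A → H → H)
    (hπ : ∀ (p : A × A) (x : H),
      π p x = (1 / 2 : ℂ) • (π0 p.1 x + T (π0 p.1 x))
            + (1 / 2 : ℂ) • (π0 p.2 x - T (π0 p.2 x))) :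
    (∀ (a a' b b' : A) (x : H),
        π (a, a') (hat (π (star b, star b')) x) = hat (π (star b, star b')) (π (a, a') x))
      ↔ ((∀ x : H, T (hat (⇑T) x) = hat (⇑T) (T x)) ∧
         (∀ (a : A) (x : H), π0 a (hat (⇑T) x) = hat (⇑T) (π0 a x))) := by

  have hε2 : ε * ε = 1 := by rcases hε with h | h <;> simp [h]
  have hε0 : ε ≠ 0 := by rcases hε with h | h <;> simp [h]
  have hεr : (starRingEnd ℂ) ε = ε := by rcases hε with h | h <;> simp [h]
  have hJeps : ∀ x : H, J (ε • x) = ε • J x := fun x => by rw [hJsmul, hεr]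
  have hεε : ∀ x : H, ε • ε • x = x := fun x => by rw [smul_smul, hε2, one_smul]
  have hJJ : ∀ x : H, J (ε • J x) = x := fun x => by rw [hJeps, hJ2, hεε]
  have hJneg : ∀ x : H, J (-x) = - J x := fun x => by
    have h := hJsmul (-1) x
    simpa using h
  have hJsub : ∀ x y : H, J (x - y) = J x - J y := fun x y => by
    rw [sub_eq_add_neg, hJadd, hJneg, sub_eq_add_neg]
  -- pointwise linearity of hat S for a continuous linear S
  have hatptadd : ∀ (S : H →L[ℂ] H) (x y : H),
      hat ⇑S (x + y) = hat ⇑S x + hat ⇑S y := by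
    intro S x y
    simp only [hhat, hJadd, smul_add, map_add]
  have hatptsub : ∀ (S : H →L[ℂ] H) (x y : H),
      hat ⇑S (x - y) = hat ⇑S x - hat ⇑S y := by
    intro S x y
    simp only [hhat, hJsub, smul_sub, map_sub]
  have hatptsmul : ∀ (S : H →L[ℂ] H) (c : ℂ) (x : H),
      hat ⇑S (c • x) = c • hat ⇑S x := by
    intro S c x
    rw [hhat, hhat, hJsmul, smul_comm ε ((starRingEnd ℂ) c) (J x), map_smul, hJsmul,
      Complex.conj_conj]
  -- hat of operator combinations
  have hat1 : ∀ x : H, hat ⇑(1 : H →L[ℂ] H) x = x := by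
    intro x
    simp only [hhat, ContinuousLinearMap.one_apply, hJJ]
  have hatadd : ∀ (S1 S2 : H →L[ℂ] H) (x : H),
      hat ⇑(S1 + S2) x = hat ⇑S1 x + hat ⇑S2 x := by
    intro S1 S2 x
    simp only [hhat, ContinuousLinearMap.add_apply, hJadd]
  have hatsub : ∀ (S1 S2 : H →L[ℂ] H) (x : H),
      hat ⇑(S1 - S2) x = hat ⇑S1 x - hat ⇑S2 x := by
    intro S1 S2 x
    simp only [hhat, ContinuousLinearMap.sub_apply, hJsub]
  have hatsmulS : ∀ (c : ℂ) (S : H →L[ℂ] H) (x : H),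
      hat ⇑(c • S) x = (starRingEnd ℂ c) • hat ⇑S x := by
    intro c S x
    simp only [hhat, ContinuousLinearMap.smul_apply, hJsmul]
  have hatcomp : ∀ (S S' : H → H) (x : H),
      hat S (hat S' x) = J (S (S' (ε • J x))) := by
    intro S S' x
    rw [hhat S, hhat S', hJ2, hεε]
  have hatmul : ∀ (S1 S2 : H →L[ℂ] H) (x : H),
      hat ⇑(S1 * S2) x = hat ⇑S1 (hat ⇑S2 x) := by
    intro S1 S2 x
    rw [hatcomp, hhat]
    simp only [ContinuousLinearMap.mul_apply]
  -- commutation transfer under hat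
  have key : ∀ (S S' : H →L[ℂ] H),
      (∀ x, S (hat ⇑S' x) = hat ⇑S' (S x)) →
      ∀ x, S' (hat ⇑S x) = hat ⇑S (S' x) := by
    intro S S' h x
    have h1 := h (ε • J x)
    simp only [hhat] at h1
    rw [hJJ, map_smul, hJeps, map_smul] at h1
    rw [← hhat ⇑S x] at h1
    rw [map_smul, hJeps] at h1
    have h2 := smul_right_injective H hε0 h1
    rw [hhat ⇑S (S' x), map_smul, hJeps, h2, hJ2, hεε]
  constructor
  · -- forward direction
    intro h
    have hπaa : ∀ (a : A) (y : H), π (a, a) y = π0 a y := by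
      intro a y
      rw [hπ]
      module
    have hπT : ∀ y : H, π (1, -1) y = T y := by
      intro y
      rw [hπ]
      simp only [map_one, map_neg, ContinuousLinearMap.one_apply,
        ContinuousLinearMap.neg_apply, map_neg]
      module
    have hfunT : π (1, -1) = ⇑T := funext hπT
    refine ⟨fun x => ?_, fun a x => ?_⟩
    · have E := h 1 (-1) 1 (-1) x
      rw [star_one, star_neg, star_one, hfunT] at E
      exact E
    · have E := h a a 1 (-1) x
      rw [star_one, star_neg, star_one, hfunT] at E
      rw [hπaa, hπaa] at E
      exact E
  · -- reverse direction
    rintro ⟨h1, h2⟩ a a' b b' x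
    set P : H →L[ℂ] H := (1/2 : ℂ) • (1 + T) with hP
    set Q : H →L[ℂ] H := (1/2 : ℂ) • (1 - T) with hQ
    have hπfun : ∀ p : A × A, π p = ⇑(P * π0 p.1 + Q * π0 p.2) := by
      intro p
      funext y
      rw [hπ, hP, hQ]
      simp only [ContinuousLinearMap.add_apply, ContinuousLinearMap.mul_apply,
        ContinuousLinearMap.smul_apply, ContinuousLinearMap.one_apply,
        ContinuousLinearMap.sub_apply, smul_add, smul_sub]
    -- commuting closure lemmas
    have commL_add : ∀ (S1 S2 S' : H →L[ℂ] H),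
        (∀ x, S1 (hat ⇑S' x) = hat ⇑S' (S1 x)) →
        (∀ x, S2 (hat ⇑S' x) = hat ⇑S' (S2 x)) →
        ∀ x, (S1 + S2) (hat ⇑S' x) = hat ⇑S' ((S1 + S2) x) := by
      intro S1 S2 S' hc1 hc2 x
      simp only [ContinuousLinearMap.add_apply, hc1, hc2, hatptadd]
    have commL_sub : ∀ (S1 S2 S' : H →L[ℂ] H),
        (∀ x, S1 (hat ⇑S' x) = hat ⇑S' (S1 x)) →
        (∀ x, S2 (hat ⇑S' x) = hat ⇑S' (S2 x)) →
        ∀ x, (S1 - S2) (hat ⇑S' x) = hat ⇑S' ((S1 - S2) x) := by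
      intro S1 S2 S' hc1 hc2 x
      simp only [ContinuousLinearMap.sub_apply, hc1, hc2, hatptsub]
    have commL_smul : ∀ (c : ℂ) (S S' : H →L[ℂ] H),
        (∀ x, S (hat ⇑S' x) = hat ⇑S' (S x)) →
        ∀ x, (c • S) (hat ⇑S' x) = hat ⇑S' ((c • S) x) := by
      intro c S S' hc x
      simp only [ContinuousLinearMap.smul_apply, hc, hatptsmul]
    have commL_mul : ∀ (S1 S2 S' : H →L[ℂ] H),
        (∀ x, S1 (hat ⇑S' x) = hat ⇑S' (S1 x)) →
        (∀ x, S2 (hat ⇑S' x) = hat ⇑S' (S2 x)) →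
        ∀ x, (S1 * S2) (hat ⇑S' x) = hat ⇑S' ((S1 * S2) x) := by
      intro S1 S2 S' hc1 hc2 x
      simp only [ContinuousLinearMap.mul_apply, hc1, hc2]
    have commR_add : ∀ (S S1 S2 : H →L[ℂ] H),
        (∀ x, S (hat ⇑S1 x) = hat ⇑S1 (S x)) →
        (∀ x, S (hat ⇑S2 x) = hat ⇑S2 (S x)) →
        ∀ x, S (hat ⇑(S1 + S2) x) = hat ⇑(S1 + S2) (S x) := by
      intro S S1 S2 hc1 hc2 x
      simp only [hatadd, map_add, hc1, hc2]
    have commR_sub : ∀ (S S1 S2 : H →L[ℂ] H),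
        (∀ x, S (hat ⇑S1 x) = hat ⇑S1 (S x)) →
        (∀ x, S (hat ⇑S2 x) = hat ⇑S2 (S x)) →
        ∀ x, S (hat ⇑(S1 - S2) x) = hat ⇑(S1 - S2) (S x) := by
      intro S S1 S2 hc1 hc2 x
      simp only [hatsub, map_sub, hc1, hc2]
    have commR_smul : ∀ (c : ℂ) (S S' : H →L[ℂ] H),
        (∀ x, S (hat ⇑S' x) = hat ⇑S' (S x)) →
        ∀ x, S (hat ⇑(c • S') x) = hat ⇑(c • S') (S x) := by
      intro c S S' hc x
      simp only [hatsmulS, map_smul, hc]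
    have commR_mul : ∀ (S S1 S2 : H →L[ℂ] H),
        (∀ x, S (hat ⇑S1 x) = hat ⇑S1 (S x)) →
        (∀ x, S (hat ⇑S2 x) = hat ⇑S2 (S x)) →
        ∀ x, S (hat ⇑(S1 * S2) x) = hat ⇑(S1 * S2) (S x) := by
      intro S S1 S2 hc1 hc2 x
      simp only [hatmul, hc1, hc2]
    -- generator commutations
    have g1 : ∀ (a c : A) (x : H), π0 a (hat ⇑(π0 c) x) = hat ⇑(π0 c) (π0 a x) := by
      intro a c x
      have h := h0 a (star c) x
      rwa [star_star] at h
    have g2 : ∀ (c : A) (x : H), T (hat ⇑(π0 c) x) = hat ⇑(π0 c) (T x) :=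
      fun c => key (π0 c) T (h2 c)
    -- assembly
    have assembleR : ∀ (S : H →L[ℂ] H) (c c' : A),
        (∀ x, S (hat ⇑T x) = hat ⇑T (S x)) →
        (∀ (d : A) (x : H), S (hat ⇑(π0 d) x) = hat ⇑(π0 d) (S x)) →
        ∀ x, S (hat ⇑(P * π0 c + Q * π0 c') x) = hat ⇑(P * π0 c + Q * π0 c') (S x) := by
      intro S c c' hT hA
      have hone : ∀ x, S (hat ⇑(1 : H →L[ℂ] H) x) = hat ⇑(1 : H →L[ℂ] H) (S x) := by
        intro x; simp only [hat1]
      have hPc : ∀ x, S (hat ⇑P x) = hat ⇑P (S x) :=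
        commR_smul _ _ _ (commR_add _ _ _ hone hT)
      have hQc : ∀ x, S (hat ⇑Q x) = hat ⇑Q (S x) :=
        commR_smul _ _ _ (commR_sub _ _ _ hone hT)
      exact commR_add _ _ _ (commR_mul _ _ _ hPc (hA c)) (commR_mul _ _ _ hQc (hA c'))
    have assemble : ∀ (a a' : A) (R : H →L[ℂ] H),
        (∀ x, T (hat ⇑R x) = hat ⇑R (T x)) →
        (∀ (d : A) (x : H), π0 d (hat ⇑R x) = hat ⇑R (π0 d x)) →
        ∀ x, (P * π0 a + Q * π0 a') (hat ⇑R x) = hat ⇑R ((P * π0 a + Q * π0 a') x) := by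
      intro a a' R hT hA
      have hone : ∀ x, (1 : H →L[ℂ] H) (hat ⇑R x) = hat ⇑R ((1 : H →L[ℂ] H) x) := by
        intro x; simp only [ContinuousLinearMap.one_apply]
      have hPc : ∀ x, P (hat ⇑R x) = hat ⇑R (P x) :=
        commL_smul _ _ _ (commL_add _ _ _ hone hT)
      have hQc : ∀ x, Q (hat ⇑R x) = hat ⇑R (Q x) :=
        commL_smul _ _ _ (commL_sub _ _ _ hone hT)
      exact commL_add _ _ _ (commL_mul _ _ _ hPc (hA a)) (commL_mul _ _ _ hQc (hA a'))
    have hTR := assembleR T (star b) (star b') h1 g2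
    have hAR : ∀ (c : A) (x : H),
        π0 c (hat ⇑(P * π0 (star b) + Q * π0 (star b')) x)
          = hat ⇑(P * π0 (star b) + Q * π0 (star b')) (π0 c x) :=
      fun c => assembleR (π0 c) (star b) (star b') (h2 c) (g1 c)
    have main := assemble a a' (P * π0 (star b) + Q * π0 (star b')) hTR hAR x
    rw [hπfun (a, a'), hπfun (star b, star b')]
    exact main
end

section
/- For an almost commutative geometry with J = J1 ⊗ J_F, J1γ1 = ε''γ1J1, D = D1 ⊗ 1 + γ1 ⊗ D_F, T = γ1 ⊗ T_F: the two conditions {{D,T}, JTJ⁻¹} = 0 and [{D,T}, Jπ0(a)J⁻¹] = 0 for all a = f ⊗ m, are jointly equivalent to the finite-dimensional conditions {{D_F,T_F}, J_F T_F J_F⁻¹} = 0 and [{D_F,T_F}, J_F π_F(m) J_F⁻¹] = 0 for all m ∈ A_F. -/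
open scoped TensorProduct

lemma tmul_right_cancel₀ {E F : Type*} [NormedAddCommGroup E] [InnerProductSpace ℂ E]
    [AddCommGroup F] [Module ℂ F] (x : E) (hx : x ≠ 0) (a : F)
    (h : x ⊗ₜ[ℂ] a = 0) : a = 0 := by
  have h2 := congrArg (fun z => (TensorProduct.lid ℂ F)
      (TensorProduct.map ((innerSL ℂ x).toLinearMap) (LinearMap.id) z)) h
  simp only [TensorProduct.map_tmul, LinearMap.id_coe, id_eq, map_zero,
    TensorProduct.lid_tmul, ContinuousLinearMap.coe_coe, innerSL_apply_apply] at h2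
  rcases smul_eq_zero.mp h2 with h3 | h3
  · exact absurd h3 (inner_self_ne_zero.mpr hx)
  · exact h3

/-- For an almost commutative geometry with `J = J1 ⊗ J_F`,
`J1 γ1 = ε'' γ1 J1`, `D = D1 ⊗ 1 + γ1 ⊗ D_F`, `T = γ1 ⊗ T_F` (with `γ1` a grading
anticommuting with `D1`): the conditions `{{D,T}, JTJ⁻¹} = 0` and
`[{D,T}, Jπ0(f⊗m)J⁻¹] = 0` for all `f, m` are jointly equivalent to
`{{D_F,T_F}, J_F T_F J_F⁻¹} = 0` and `[{D_F,T_F}, J_F π_F(m) J_F⁻¹] = 0` for all `m`. -/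
theorem stmt15
    {H1 : Type*} [NormedAddCommGroup H1] [InnerProductSpace ℂ H1] [CompleteSpace H1]
    [Nontrivial H1]
    {H2 : Type*} [NormedAddCommGroup H2] [InnerProductSpace ℂ H2] [FiniteDimensional ℂ H2]
    {A1 : Type*} [Ring A1] [StarRing A1] [Algebra ℂ A1] [StarModule ℂ A1]
    {AF : Type*} [Ring AF] [StarRing AF] [Algebra ℂ AF] [StarModule ℂ AF]
    (π1 : A1 →⋆ₐ[ℂ] (H1 →L[ℂ] H1)) (πF : AF →⋆ₐ[ℂ] (H2 →L[ℂ] H2))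
    (γ1 : H1 →L[ℂ] H1) (hγsa : IsSelfAdjoint γ1) (hγsq : γ1 * γ1 = 1)
    (hγcomm : ∀ f : A1, γ1 * π1 f = π1 f * γ1)
    (D1 : H1 →ₗ[ℂ] H1) (hanti : ∀ x : H1, γ1 (D1 x) = -D1 (γ1 x))
    (J1 : H1 → H1) (J1inv : H1 → H1)
    (hJ1add : ∀ x y, J1 (x + y) = J1 x + J1 y)
    (hJ1smul : ∀ (c : ℂ) x, J1 (c • x) = (starRingEnd ℂ c) • J1 x)
    (hJ1norm : ∀ x, ‖J1 x‖ = ‖x‖)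
    (hJ1li : Function.LeftInverse J1inv J1) (hJ1ri : Function.RightInverse J1inv J1)
    (JF : H2 → H2) (JFinv : H2 → H2)
    (hJFadd : ∀ x y, JF (x + y) = JF x + JF y)
    (hJFsmul : ∀ (c : ℂ) x, JF (c • x) = (starRingEnd ℂ c) • JF x)
    (hJFnorm : ∀ x, ‖JF x‖ = ‖x‖)
    (hJFli : Function.LeftInverse JFinv JF) (hJFri : Function.RightInverse JFinv JF)
    (ε'' : ℂ) (hε'' : ε'' = 1 ∨ ε'' = -1)
    (hJγ : ∀ x : H1, J1 (γ1 x) = ε'' • γ1 (J1 x))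
    (DF TF : H2 →L[ℂ] H2) (hTFsa : IsSelfAdjoint TF) (hTFsq : TF * TF = 1)
    (hTFcomm : ∀ m : AF, TF * πF m = πF m * TF)
    (D : H1 ⊗[ℂ] H2 →ₗ[ℂ] H1 ⊗[ℂ] H2)
    (hD : D = TensorProduct.map D1 (LinearMap.id : H2 →ₗ[ℂ] H2)
        + TensorProduct.map (γ1 : H1 →ₗ[ℂ] H1) (DF : H2 →ₗ[ℂ] H2))
    (T : H1 ⊗[ℂ] H2 →ₗ[ℂ] H1 ⊗[ℂ] H2)
    (hT : T = TensorProduct.map (γ1 : H1 →ₗ[ℂ] H1) (TF : H2 →ₗ[ℂ] H2))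
    (π0 : A1 → AF → (H1 ⊗[ℂ] H2 →ₗ[ℂ] H1 ⊗[ℂ] H2))
    (hπ0 : ∀ (f : A1) (m : AF),
      π0 f m = TensorProduct.map (π1 f : H1 →ₗ[ℂ] H1) (πF m : H2 →ₗ[ℂ] H2))
    (J : H1 ⊗[ℂ] H2 → H1 ⊗[ℂ] H2) (Jinv : H1 ⊗[ℂ] H2 → H1 ⊗[ℂ] H2)
    (hJadd : ∀ x y, J (x + y) = J x + J y)
    (hJinvadd : ∀ x y, Jinv (x + y) = Jinv x + Jinv y)
    (hJtmul : ∀ (x1 : H1) (x2 : H2), J (x1 ⊗ₜ[ℂ] x2) = J1 x1 ⊗ₜ[ℂ] JF x2)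
    (hJinvtmul : ∀ (x1 : H1) (x2 : H2), Jinv (x1 ⊗ₜ[ℂ] x2) = J1inv x1 ⊗ₜ[ℂ] JFinv x2)
    (hJli : Function.LeftInverse Jinv J) (hJri : Function.RightInverse Jinv J) :
    ((∀ x : H1 ⊗[ℂ] H2,
        (D (T (J (T (Jinv x)))) + T (D (J (T (Jinv x)))))
          + J (T (Jinv (D (T x) + T (D x)))) = 0) ∧
     (∀ (f : A1) (m : AF) (x : H1 ⊗[ℂ] H2),
        D (T (J (π0 f m (Jinv x)))) + T (D (J (π0 f m (Jinv x))))
          = J (π0 f m (Jinv (D (T x) + T (D x))))))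
    ↔ ((∀ y : H2,
          (DF (TF (JF (TF (JFinv y)))) + TF (DF (JF (TF (JFinv y)))))
            + JF (TF (JFinv (DF (TF y) + TF (DF y)))) = 0) ∧
       (∀ (m : AF) (y : H2),
          DF (TF (JF (πF m (JFinv y)))) + TF (DF (JF (πF m (JFinv y))))
            = JF (πF m (JFinv (DF (TF y) + TF (DF y)))))) := by
  obtain ⟨x0, hx0⟩ := exists_ne (0 : H1)
  have hJ1ri' : ∀ x, J1 (J1inv x) = x := hJ1ri
  set SFl : H2 →ₗ[ℂ] H2 :=
    ((DF : H2 →ₗ[ℂ] H2) ∘ₗ (TF : H2 →ₗ[ℂ] H2)) + ((TF : H2 →ₗ[ℂ] H2) ∘ₗ (DF : H2 →ₗ[ℂ] H2))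
    with hSFl
  have hSFpt : ∀ y : H2, DF (TF y) + TF (DF y) = SFl y := by
    intro y; simp [hSFl]
  have hγγ : ∀ x : H1, γ1 (γ1 x) = x := by
    intro x
    have := congrArg (fun A : H1 →L[ℂ] H1 => A x) hγsq
    simpa using this
  have hεne : ε'' ≠ 0 := by rcases hε'' with h | h <;> simp [h]
  have hx0' : γ1 x0 ≠ 0 := by
    intro h
    apply hx0
    rw [← hγγ x0, h, map_zero]
  have hSpt : ∀ u : H1 ⊗[ℂ] H2,
      D (T u) + T (D u) = TensorProduct.map LinearMap.id SFl u := by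
    have hmap : D ∘ₗ T + T ∘ₗ D = TensorProduct.map LinearMap.id SFl := by
      rw [hD, hT]
      apply TensorProduct.ext'
      intro x y
      simp only [LinearMap.add_apply, LinearMap.comp_apply, TensorProduct.map_tmul,
        LinearMap.id_coe, id_eq, ContinuousLinearMap.coe_coe, TensorProduct.add_tmul,
        TensorProduct.tmul_add, hSFl, hanti, hγγ, TensorProduct.neg_tmul, map_add]
      abel
    intro u
    simpa using LinearMap.ext_iff.mp hmap u
  have hJ0 : J 0 = 0 := by
    have h := hJadd 0 0
    rw [add_zero] at h
    exact (left_eq_add.mp h)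
  have hJinv0 : Jinv 0 = 0 := by
    have h := hJinvadd 0 0
    rw [add_zero] at h
    exact (left_eq_add.mp h)
  have hJTJ : ∀ (x1 : H1) (y : H2),
      J (T (Jinv (x1 ⊗ₜ[ℂ] y))) = ε'' • (γ1 x1 ⊗ₜ[ℂ] JF (TF (JFinv y))) := by
    intro x1 y
    rw [hJinvtmul, hT, TensorProduct.map_tmul, ContinuousLinearMap.coe_coe,
      ContinuousLinearMap.coe_coe, hJtmul, hJγ, hJ1ri' x1, ← TensorProduct.smul_tmul']
  have hJP : ∀ (f : A1) (m : AF) (x1 : H1) (y : H2),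
      J ((π0 f m) (Jinv (x1 ⊗ₜ[ℂ] y)))
        = J1 ((π1 f) (J1inv x1)) ⊗ₜ[ℂ] JF ((πF m) (JFinv y)) := by
    intro f m x1 y
    rw [hJinvtmul, hπ0, TensorProduct.map_tmul, ContinuousLinearMap.coe_coe,
      ContinuousLinearMap.coe_coe, hJtmul]
  constructor
  · rintro ⟨h1, h2⟩
    constructor
    · intro y
      have h := h1 (x0 ⊗ₜ[ℂ] y)
      simp only [hSpt] at h
      simp only [TensorProduct.map_tmul, LinearMap.id_coe, id_eq] at h
      rw [hJTJ, hJTJ, map_smul, TensorProduct.map_tmul] at h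
      simp only [LinearMap.id_coe, id_eq] at h
      rw [← smul_add, ← TensorProduct.tmul_add] at h
      rcases smul_eq_zero.mp h with h' | h'
      · exact absurd h' hεne
      · have := tmul_right_cancel₀ _ hx0' _ h'
        simp only [hSFpt]
        exact this
    · intro m y
      have h := h2 1 m (x0 ⊗ₜ[ℂ] y)
      simp only [hSpt] at h
      simp only [TensorProduct.map_tmul, LinearMap.id_coe, id_eq] at h
      rw [hJP, hJP] at h
      simp only [map_one, ContinuousLinearMap.one_apply, hJ1ri'] at h
      rw [TensorProduct.map_tmul] at h
      simp only [LinearMap.id_coe, id_eq] at h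
      have hsub : x0 ⊗ₜ[ℂ]
          (SFl (JF ((πF m) (JFinv y))) - JF ((πF m) (JFinv (SFl y)))) = 0 := by
        rw [TensorProduct.tmul_sub, sub_eq_zero]
        exact h
      have := tmul_right_cancel₀ _ hx0 _ hsub
      have heq := sub_eq_zero.mp this
      simp only [hSFpt]
      exact heq
  · rintro ⟨h1, h2⟩
    have h1' : ∀ y : H2, SFl (JF (TF (JFinv y))) + JF (TF (JFinv (SFl y))) = 0 := by
      intro y
      have := h1 y
      simp only [hSFpt] at this
      exact this
    have h2' : ∀ (m : AF) (y : H2),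
        SFl (JF ((πF m) (JFinv y))) = JF ((πF m) (JFinv (SFl y))) := by
      intro m y
      have := h2 m y
      simp only [hSFpt] at this
      exact this
    constructor
    · intro x
      simp only [hSpt]
      induction x using TensorProduct.induction_on with
      | zero => simp [hJinv0, hJ0, map_zero]
      | tmul x1 y =>
        rw [hJTJ]
        rw [show (TensorProduct.map LinearMap.id SFl) (x1 ⊗ₜ[ℂ] y) = x1 ⊗ₜ[ℂ] SFl y by
          simp [TensorProduct.map_tmul]]
        rw [hJTJ, map_smul, TensorProduct.map_tmul]
        simp only [LinearMap.id_coe, id_eq]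
        rw [← smul_add, ← TensorProduct.tmul_add, h1' y, TensorProduct.tmul_zero, smul_zero]
      | add a b ha hb =>
        simp only [hJinvadd, hJadd, map_add]
        rw [add_add_add_comm, ha, hb, add_zero]
    · intro f m x
      simp only [hSpt]
      induction x using TensorProduct.induction_on with
      | zero => simp [hJinv0, hJ0, map_zero]
      | tmul x1 y =>
        rw [hJP]
        rw [show (TensorProduct.map LinearMap.id SFl) (x1 ⊗ₜ[ℂ] y) = x1 ⊗ₜ[ℂ] SFl y by
          simp [TensorProduct.map_tmul]]
        rw [hJP, TensorProduct.map_tmul]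
        simp only [LinearMap.id_coe, id_eq]
        rw [h2' m y]
      | add a b ha hb =>
        simp only [hJinvadd, hJadd, map_add]
        rw [ha, hb]
end
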